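/- arXiv:2512.00190 — 13 statements merged into one kernel-verified Lean document; each statement's English description precedes it below -/
import Mathlib

section
/- If (x_K, x_S) ∈ ℝᵏ × ℝˢ satisfies A·(x_K, x_S) = 0 and 𝟙ᵀ·x_K = 0 (the coordinates of x_K sum to zero), then x_K = 0. -/
open Matrix

/-- If `(x_K, x_S)` is in the kernel of `A` and the coordinates
of `x_K` sum to zero, then `x_K = 0`. -/
theorem stmt_3 (k s : ℕ)
    (R : Matrix (Fin k) (Fin s) ℝ) (hR01 : ∀ i j, R i j = 0 ∨ R i j = 1)
    (J : Matrix (Fin k) (Fin k) ℝ) (hJ : ∀ i j, J i j = 1)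
    (A : Matrix (Fin k ⊕ Fin s) (Fin k ⊕ Fin s) ℝ)
    (hA : A = Matrix.fromBlocks (J - 1) R Rᵀ 0)
    (xK : Fin k → ℝ) (xS : Fin s → ℝ)
    (hker : A.mulVec (Sum.elim xK xS) = 0)
    (hsum : ∑ i, xK i = 0) :
    xK = 0 := by
  subst hA
  rw [Matrix.fromBlocks_mulVec] at hker
  have htop : (J - 1).mulVec xK + R.mulVec xS = 0 := by
    funext i; have := congrFun hker (Sum.inl i); simpa using this
  have hbot : Rᵀ.mulVec xK = 0 := by
    funext j; have := congrFun hker (Sum.inr j); simpa using this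
  have hJx : J.mulVec xK = 0 := by
    funext i
    simp only [Matrix.mulVec, dotProduct, hJ, one_mul, Pi.zero_apply]
    exact hsum
  have hxK : xK = R.mulVec xS := by
    have h1 : (J - 1).mulVec xK = -xK := by
      rw [Matrix.sub_mulVec, hJx, Matrix.one_mulVec]
      funext i; simp
    rw [h1] at htop
    funext i
    have := congrFun htop i
    simp at this
    linarith [this]
  have hsq : ∑ i, xK i * xK i = 0 := by
    have : xK ⬝ᵥ xK = (Rᵀ.mulVec xK) ⬝ᵥ xS := by
      nth_rewrite 2 [hxK]
      rw [Matrix.dotProduct_mulVec, Matrix.mulVec_transpose]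
    rw [hbot] at this
    simpa [dotProduct] using this
  funext i
  have h := (Finset.sum_eq_zero_iff_of_nonneg (fun j _ => mul_self_nonneg (xK j))).mp hsq i (Finset.mem_univ i)
  have := mul_self_eq_zero.mp h
  simpa using this
end

section
/- If the all-ones vector 𝟙 ∈ ℝᵏ lies in the column space of R, then every vector (x_K, x_S) ∈ ℝᵏ × ℝˢ in the nullspace of A has x_K = 0 (i.e., the support of the split graph is contained in the independent set S). -/
/-!
Blockwise, `A x = 0` says `(J - I) x_K + R x_S = 0` and `Rᵀ x_K = 0`. Since `𝟙 = R y`, the sum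
of `x_K` is `⟪R y, x_K⟫ = ⟪y, Rᵀ x_K⟫ = 0`, so `J x_K = 0` and the first equation becomes
`x_K = R x_S`. Then `x_K` lies both in the column space of `R` and in the kernel of `Rᵀ`, which
over an ordered ring forces `x_K = 0`.
-/

open Matrix

namespace Matrix

variable {m n α : Type*} [Fintype n]

theorem mulVec_eq_sum_of_forall_eq_one [NonAssocSemiring α] {J : Matrix m n α}
    (hJ : ∀ i j, J i j = 1) (x : n → α) : J *ᵥ x = fun _ => ∑ j, x j := by
  ext i
  simp [mulVec, dotProduct, hJ]

theorem sum_eq_zero_of_mulVec_eq_one [Fintype m] [CommSemiring α] {R : Matrix m n α}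
    {y : n → α} (hy : R *ᵥ y = fun _ => 1) {x : m → α} (hx : Rᵀ *ᵥ x = 0) :
    ∑ i, x i = 0 := by
  have : (R *ᵥ y) ⬝ᵥ x = 0 := by
    rw [dotProduct_comm, dotProduct_mulVec, ← mulVec_transpose, hx, zero_dotProduct]
  simpa [hy, dotProduct] using this

theorem eq_zero_of_eq_mulVec_of_transpose_mulVec_eq_zero
    [Fintype m] [CommRing α] [LinearOrder α] [IsStrictOrderedRing α] {R : Matrix m n α}
    {x : m → α} {z : n → α} (hxz : x = R *ᵥ z) (hx : Rᵀ *ᵥ x = 0) : x = 0 := by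
  have : z ⬝ᵥ Rᵀ *ᵥ x = 0 := by rw [hx, dotProduct_zero]
  rwa [dotProduct_mulVec, vecMul_transpose, ← hxz, dotProduct_self_eq_zero] at this

end Matrix

theorem stmt_4_general (k s : ℕ)
    (R : Matrix (Fin k) (Fin s) ℝ)
    (J : Matrix (Fin k) (Fin k) ℝ) (hJ : ∀ i j, J i j = 1)
    (A : Matrix (Fin k ⊕ Fin s) (Fin k ⊕ Fin s) ℝ)
    (hA : A = Matrix.fromBlocks (J - 1) R Rᵀ 0)
    (hone : ∃ y : Fin s → ℝ, R.mulVec y = fun _ => 1) :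
    ∀ (xK : Fin k → ℝ) (xS : Fin s → ℝ),
      A.mulVec (Sum.elim xK xS) = 0 → xK = 0 := by
  intro xK xS h
  obtain ⟨y, hy⟩ := hone
  rw [hA, fromBlocks_mulVec, Sum.elim_comp_inl, Sum.elim_comp_inr, ← Sum.elim_zero_zero,
    Sum.elim_eq_iff] at h
  obtain ⟨hK, hS⟩ := h
  rw [zero_mulVec, add_zero] at hS
  have hJx : J *ᵥ xK = 0 := by
    rw [mulVec_eq_sum_of_forall_eq_one hJ, sum_eq_zero_of_mulVec_eq_one hy hS]
    rfl
  have hxK : xK = R *ᵥ xS := by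
    rwa [sub_mulVec, hJx, one_mulVec, zero_sub, neg_add_eq_zero] at hK
  exact eq_zero_of_eq_mulVec_of_transpose_mulVec_eq_zero hxK hS

/-- If the all-ones vector lies in the column space of `R`,
then every kernel vector `(x_K, x_S)` of `A` has `x_K = 0`. -/
theorem stmt_4 (k s : ℕ)
    (R : Matrix (Fin k) (Fin s) ℝ) (hR01 : ∀ i j, R i j = 0 ∨ R i j = 1)
    (J : Matrix (Fin k) (Fin k) ℝ) (hJ : ∀ i j, J i j = 1)
    (A : Matrix (Fin k ⊕ Fin s) (Fin k ⊕ Fin s) ℝ)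
    (hA : A = Matrix.fromBlocks (J - 1) R Rᵀ 0)
    (hone : ∃ y : Fin s → ℝ, R.mulVec y = fun _ => 1) :
    ∀ (xK : Fin k → ℝ) (xS : Fin s → ℝ),
      A.mulVec (Sum.elim xK xS) = 0 → xK = 0 :=
  stmt_4_general k s R J hJ A hA hone
end

section
/- Assume k ≥ 2. A vector x ∈ ℝᵏ belongs to the clique-kernel ck(Sp) = ker(Rᵀ) ∩ range((I − J)⁻¹·R) if and only if there exists y ∈ ℝˢ such that A·(x, y) = 0. -/
/-!
The block equation `A (x, y) = 0` splits into `Rᵀ x = 0` and `R y = (I - J) x`. By the matrix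
determinant lemma `det (I - J) = 1 - k ≠ 0`, so the second equation says `x = (I - J)⁻¹ R y`.
-/

open Matrix

namespace Matrix

variable {m n α : Type*} [Fintype m] [DecidableEq m] [Fintype n] [CommRing α]

theorem det_one_sub_all_ones :
    (1 - of fun _ _ : m => (1 : α)).det = 1 - Fintype.card m := by
  have hJ : (of fun _ _ : m => (1 : α)) =
      replicateCol Unit (fun _ => (1 : α)) * replicateRow Unit (fun _ => (1 : α)) := by
    ext i j
    simp [mul_apply]
  rw [hJ, det_one_sub_mul_comm, det_unique, sub_apply, one_apply_eq,
    replicateRow_mul_replicateCol_apply]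
  simp [dotProduct]

theorem nonsing_inv_mulVec_eq_iff {M : Matrix m m α} (hM : IsUnit M.det) {u v : m → α} :
    M⁻¹ *ᵥ u = v ↔ u = M *ᵥ v := by
  constructor
  · rintro rfl
    rw [mulVec_mulVec, mul_nonsing_inv _ hM, one_mulVec]
  · rintro rfl
    rw [mulVec_mulVec, nonsing_inv_mul _ hM, one_mulVec]

theorem exists_fromBlocks_neg_mulVec_eq_zero_iff {M : Matrix m m α} (hM : IsUnit M.det)
    (B : Matrix m n α) (C : Matrix n m α) (x : m → α) :
    (∃ y, fromBlocks (-M) B C 0 *ᵥ Sum.elim x y = 0) ↔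
      C *ᵥ x = 0 ∧ ∃ w, (M⁻¹ * B) *ᵥ w = x := by
  simp only [fromBlocks_mulVec, Sum.elim_comp_inl, Sum.elim_comp_inr, zero_mulVec, add_zero,
    ← Sum.elim_zero_zero, Sum.elim_eq_iff, ← mulVec_mulVec, nonsing_inv_mulVec_eq_iff hM,
    neg_mulVec, neg_add_eq_zero]
  exact ⟨fun ⟨y, hy, hx⟩ => ⟨hx, y, hy.symm⟩, fun ⟨hx, y, hy⟩ => ⟨y, hy.symm, hx⟩⟩

end Matrix

theorem stmt_5_general (k s : ℕ) (hk : 2 ≤ k)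
    (R : Matrix (Fin k) (Fin s) ℝ)
    (J : Matrix (Fin k) (Fin k) ℝ) (hJ : ∀ i j, J i j = 1)
    (A : Matrix (Fin k ⊕ Fin s) (Fin k ⊕ Fin s) ℝ)
    (hA : A = Matrix.fromBlocks (J - 1) R Rᵀ 0)
    (x : Fin k → ℝ) :
    (Matrix.mulVec Rᵀ x = 0 ∧ ∃ w : Fin s → ℝ, ((1 - J)⁻¹ * R).mulVec w = x) ↔
      ∃ y : Fin s → ℝ, A.mulVec (Sum.elim x y) = 0 := by
  have hJ_ones : J = of fun _ _ => 1 := ext hJ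
  have hdet : IsUnit (1 - J).det := by
    rw [hJ_ones, det_one_sub_all_ones, Fintype.card_fin, isUnit_iff_ne_zero, sub_ne_zero]
    exact_mod_cast (by omega : 1 ≠ k)
  rw [hA, ← neg_sub 1 J]
  exact (exists_fromBlocks_neg_mulVec_eq_zero_iff hdet R Rᵀ x).symm

/-- For `k ≥ 2`, a vector `x ∈ ℝᵏ` belongs to the clique-kernel
`ck(Sp) = ker(Rᵀ) ∩ range((I - J)⁻¹ R)` iff there exists `y ∈ ℝˢ` with
`A (x, y) = 0`. -/
theorem stmt_5 (k s : ℕ) (hk : 2 ≤ k)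
    (R : Matrix (Fin k) (Fin s) ℝ) (hR01 : ∀ i j, R i j = 0 ∨ R i j = 1)
    (J : Matrix (Fin k) (Fin k) ℝ) (hJ : ∀ i j, J i j = 1)
    (A : Matrix (Fin k ⊕ Fin s) (Fin k ⊕ Fin s) ℝ)
    (hA : A = Matrix.fromBlocks (J - 1) R Rᵀ 0)
    (x : Fin k → ℝ) :
    (Matrix.mulVec Rᵀ x = 0 ∧ ∃ w : Fin s → ℝ, ((1 - J)⁻¹ * R).mulVec w = x) ↔
      ∃ y : Fin s → ℝ, A.mulVec (Sum.elim x y) = 0 :=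
  stmt_5_general k s hk R J hJ A hA x
end

section
/- Assume k ≥ 2. If the adjacency matrix A is singular, then there exists a vector (x_K, x_S) ∈ ℝᵏ × ℝˢ with A·(x_K, x_S) = 0 and x_S ≠ 0 (i.e., the support of the split graph meets the independent set S). -/
open Matrix

/-- For `k ≥ 2`, if the adjacency matrix `A` of the split graph
is singular, then there is a kernel vector `(x_K, x_S)` of `A` with `x_S ≠ 0`. -/
theorem stmt_7 (k s : ℕ) (hk : 2 ≤ k)
    (R : Matrix (Fin k) (Fin s) ℝ) (hR01 : ∀ i j, R i j = 0 ∨ R i j = 1)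
    (J : Matrix (Fin k) (Fin k) ℝ) (hJ : ∀ i j, J i j = 1)
    (A : Matrix (Fin k ⊕ Fin s) (Fin k ⊕ Fin s) ℝ)
    (hA : A = Matrix.fromBlocks (J - 1) R Rᵀ 0)
    (hsing : A.det = 0) :
    ∃ (xK : Fin k → ℝ) (xS : Fin s → ℝ),
      A.mulVec (Sum.elim xK xS) = 0 ∧ xS ≠ 0 := by
  obtain ⟨v, hv0, hv⟩ := Matrix.exists_mulVec_eq_zero_iff.mpr hsing
  set xK : Fin k → ℝ := fun i => v (Sum.inl i)
  set xS : Fin s → ℝ := fun j => v (Sum.inr j)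
  have hve : Sum.elim xK xS = v := by funext i; cases i <;> rfl
  refine ⟨xK, xS, by rw [hve]; exact hv, ?_⟩
  intro hxS
  apply hv0
  -- show v = 0
  have hkern : A.mulVec (Sum.elim xK xS) = 0 := by rw [hve]; exact hv
  rw [hA, Matrix.fromBlocks_mulVec] at hkern
  have htop : (J - 1).mulVec xK + R.mulVec xS = 0 := funext fun i => congrFun hkern (Sum.inl i)
  rw [hxS, Matrix.mulVec_zero, add_zero] at htop
  -- entrywise: (∑ j, xK j) - xK i = 0
  have hentry : ∀ i, (∑ j, xK j) - xK i = 0 := by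
    intro i
    have := congrFun htop i
    simp only [Matrix.mulVec, dotProduct, Matrix.sub_apply, Matrix.one_apply,
      Pi.zero_apply, hJ, sub_mul, one_mul] at this
    rw [← this, Finset.sum_sub_distrib]
    congr 1
    simp [Finset.sum_ite_eq, Finset.mem_univ]
  set S := ∑ j, xK j with hS
  have hall : ∀ i, xK i = S := fun i => by have := hentry i; linarith
  have hsum : S = (k : ℝ) * S := by
    calc S = ∑ j, xK j := hS
    _ = ∑ _j : Fin k, S := Finset.sum_congr rfl fun j _ => hall j
    _ = (k : ℝ) * S := by simp [mul_comm]
  have hS0 : S = 0 := by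
    have hk' : (2 : ℝ) ≤ (k : ℝ) := by exact_mod_cast hk
    nlinarith
  funext i
  cases i with
  | inl i => have := hall i; rw [hS0] at this; exact this
  | inr j => exact congrFun hxS j
end

section
/- If k = s (so R is a square k×k matrix), then the adjacency matrix A is singular if and only if R is singular, i.e., det(A) = 0 ↔ det(R) = 0. -/
open Matrix

/-- If `k = s` (so `R` is square), then the adjacency matrix
`A` of the split graph is singular iff `R` is singular: `det A = 0 ↔ det R = 0`. -/
theorem stmt_9 (k : ℕ)
    (R : Matrix (Fin k) (Fin k) ℝ) (hR01 : ∀ i j, R i j = 0 ∨ R i j = 1)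
    (J : Matrix (Fin k) (Fin k) ℝ) (hJ : ∀ i j, J i j = 1)
    (A : Matrix (Fin k ⊕ Fin k) (Fin k ⊕ Fin k) ℝ)
    (hA : A = Matrix.fromBlocks (J - 1) R Rᵀ 0) :
    A.det = 0 ↔ R.det = 0 := by
  subst hA
  set P : Matrix (Fin k ⊕ Fin k) (Fin k ⊕ Fin k) ℝ := Matrix.fromBlocks 0 1 1 0 with hPdef
  have hP : P * Matrix.fromBlocks Rᵀ 0 (J - 1) R = Matrix.fromBlocks (J - 1) R Rᵀ 0 := by
    simp [hPdef, Matrix.fromBlocks_multiply]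
  have hPP : P * P = 1 := by
    simp [hPdef, Matrix.fromBlocks_multiply, ← Matrix.fromBlocks_one]
  have hPdet : P.det ≠ 0 := by
    intro h
    have := congrArg Matrix.det hPP
    rw [Matrix.det_mul, h, mul_zero, Matrix.det_one] at this
    exact zero_ne_one this
  have hdet : (Matrix.fromBlocks (J - 1) R Rᵀ 0).det = P.det * (Rᵀ.det * R.det) := by
    rw [← hP, Matrix.det_mul, Matrix.det_fromBlocks_zero₁₂]
  rw [hdet, Matrix.det_transpose]
  constructor
  · intro h
    rcases mul_eq_zero.mp h with h | h
    · exact absurd h hPdet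
    · exact pow_eq_zero_iff (n := 2) two_ne_zero |>.mp (by rw [sq]; exact h)
  · intro h; rw [h, mul_zero, mul_zero]
end

section
/- Suppose R is a nonzero {0,1}-matrix and all row sums of R are equal (this holds when the split graph is connected and all clique vertices have the same degree). Then every vector (x_K, x_S) ∈ ℝᵏ × ℝˢ in the nullspace of A has x_K = 0 (the support is contained in the independent set S). -/
open Matrix

/-- If `R` is a nonzero `{0,1}`-matrix all of whose row sums
are equal, then every kernel vector `(x_K, x_S)` of `A` has `x_K = 0`. -/
theorem stmt_10 (k s : ℕ)
    (R : Matrix (Fin k) (Fin s) ℝ) (hR01 : ∀ i j, R i j = 0 ∨ R i j = 1)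
    (hR0 : R ≠ 0)
    (hrows : ∀ i i' : Fin k, ∑ j, R i j = ∑ j, R i' j)
    (J : Matrix (Fin k) (Fin k) ℝ) (hJ : ∀ i j, J i j = 1)
    (A : Matrix (Fin k ⊕ Fin s) (Fin k ⊕ Fin s) ℝ)
    (hA : A = Matrix.fromBlocks (J - 1) R Rᵀ 0) :
    ∀ (xK : Fin k → ℝ) (xS : Fin s → ℝ),
      A.mulVec (Sum.elim xK xS) = 0 → xK = 0 := by
  intro xK xS h
  subst hA
  obtain ⟨i0, j0, hij⟩ : ∃ i j, R i j ≠ 0 := by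
    by_contra hc
    push_neg at hc
    exact hR0 (by ext i j; simpa using hc i j)
  have hij1 : R i0 j0 = 1 := (hR01 i0 j0).resolve_left hij
  have hnn : ∀ i j, (0:ℝ) ≤ R i j := fun i j => by rcases hR01 i j with h'|h' <;> simp [h']
  have hK : ∀ i, ((∑ l, xK l) - xK i) + ∑ j, R i j * xS j = 0 := by
    intro i
    have h1 := congrFun h (Sum.inl i)
    simp [Matrix.mulVec, dotProduct, Fintype.sum_sum_type, Matrix.fromBlocks,
      Matrix.sub_apply, Matrix.one_apply, hJ, sub_mul, Finset.sum_sub_distrib,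
      Finset.sum_ite_eq] at h1
    linarith [h1]
  have hS : ∀ j, ∑ i, R i j * xK i = 0 := by
    intro j
    have h1 := congrFun h (Sum.inr j)
    simpa [Matrix.mulVec, dotProduct, Fintype.sum_sum_type, Matrix.fromBlocks,
      Matrix.transpose_apply] using h1
  have hsum0 : (∑ j, R i0 j) * (∑ l, xK l) = 0 := by
    have h2 : ∑ i, ∑ j, R i j * xK i = 0 := by
      rw [Finset.sum_comm]
      exact Finset.sum_eq_zero fun j _ => hS j
    calc (∑ j, R i0 j) * (∑ l, xK l) = ∑ i, (∑ j, R i0 j) * xK i := by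
            rw [Finset.mul_sum]
      _ = ∑ i, ∑ j, R i j * xK i := by
            refine Finset.sum_congr rfl fun i _ => ?_
            rw [hrows i0 i, Finset.sum_mul]
      _ = 0 := h2
  have hrpos : (0:ℝ) < ∑ j, R i0 j := by
    have : (1:ℝ) ≤ ∑ j, R i0 j := by
      calc (1:ℝ) = R i0 j0 := hij1.symm
        _ ≤ ∑ j, R i0 j := Finset.single_le_sum (fun j _ => hnn i0 j) (Finset.mem_univ j0)
    linarith
  have hStot : (∑ l, xK l) = 0 := by
    rcases mul_eq_zero.mp hsum0 with h'|h'
    · exact absurd h' (ne_of_gt hrpos)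
    · exact h'
  have hxK : ∀ i, xK i = ∑ j, R i j * xS j := by
    intro i
    have := hK i
    rw [hStot] at this
    linarith
  have hsq : ∑ i, xK i * xK i = 0 := by
    calc ∑ i, xK i * xK i = ∑ i, (∑ j, R i j * xS j) * xK i := by
          refine Finset.sum_congr rfl fun i _ => ?_
          rw [← hxK i]
      _ = ∑ j, (∑ i, R i j * xK i) * xS j := by
          simp_rw [Finset.sum_mul]
          rw [Finset.sum_comm]
          refine Finset.sum_congr rfl fun i _ => Finset.sum_congr rfl fun j _ => by ring
      _ = 0 := by simp [hS]
  funext i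
  have := Finset.sum_eq_zero_iff_of_nonneg (fun i _ => mul_self_nonneg (xK i)) |>.mp hsq i (Finset.mem_univ i)
  have := mul_self_eq_zero.mp this
  simpa using this
end

section
/- Suppose every row of R contains exactly one entry equal to 1 (and the rest 0), and every column of R is nonzero (i.e., the neighborhoods in K of the independent vertices form a partition of K into nonempty sets). Then the adjacency matrix A is nonsingular: det(A) ≠ 0. -/
open Matrix

/-- If every row of `R` has exactly one entry equal to `1`
(and all other entries `0`) and every column of `R` is nonzero, then the
adjacency matrix `A` of the split graph is nonsingular. -/
theorem stmt_12 (k s : ℕ)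
    (R : Matrix (Fin k) (Fin s) ℝ) (hR01 : ∀ i j, R i j = 0 ∨ R i j = 1)
    (hrows : ∀ i : Fin k, ∃! j : Fin s, R i j = 1)
    (hcols : ∀ j : Fin s, ∃ i : Fin k, R i j ≠ 0)
    (J : Matrix (Fin k) (Fin k) ℝ) (hJ : ∀ i j, J i j = 1)
    (A : Matrix (Fin k ⊕ Fin s) (Fin k ⊕ Fin s) ℝ)
    (hA : A = Matrix.fromBlocks (J - 1) R Rᵀ 0) :
    A.det ≠ 0 := by
  intro hdet
  rw [← Matrix.exists_mulVec_eq_zero_iff] at hdet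
  obtain ⟨v, hv0, hmv⟩ := hdet
  choose f hf hf' using hrows
  have hRval : ∀ i j, R i j = if j = f i then 1 else 0 := by
    intro i j
    by_cases h : j = f i
    · subst h; simp [hf]
    · rcases hR01 i j with h0 | h1
      · simp [h, h0]
      · exact absurd (hf' i j h1) h
  set x : Fin k → ℝ := fun i => v (Sum.inl i) with hx
  set y : Fin s → ℝ := fun j => v (Sum.inr j) with hy
  set S : ℝ := ∑ i, x i with hS
  have hE1 : ∀ i, x i = S + y (f i) := by
    intro i
    have h := congrFun hmv (Sum.inl i)
    simp only [hA, Matrix.mulVec, dotProduct, Fintype.sum_sum_type,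
      Matrix.fromBlocks_apply₁₁, Matrix.fromBlocks_apply₁₂, Pi.zero_apply,
      Matrix.sub_apply, Matrix.one_apply, hJ, hRval, sub_mul, one_mul,
      ite_mul, zero_mul, Finset.sum_sub_distrib, Finset.sum_ite_eq,
      Finset.sum_ite_eq', Finset.mem_univ, if_true] at h
    have hsum : Finset.univ.sum x = S := rfl
    rw [hsum] at h
    show v (Sum.inl i) = S + v (Sum.inr (f i))
    linarith [h]
  have hE2 : ∀ j, ∑ i ∈ Finset.univ.filter (fun i => f i = j), x i = 0 := by
    intro j
    have h := congrFun hmv (Sum.inr j)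
    simp only [hA, Matrix.mulVec, dotProduct, Fintype.sum_sum_type,
      Matrix.fromBlocks_apply₂₁, Matrix.fromBlocks_apply₂₂, Pi.zero_apply,
      Matrix.transpose_apply, Matrix.zero_apply, zero_mul, Finset.sum_const_zero,
      add_zero, hRval, ite_mul, one_mul] at h
    rw [← h]
    rw [Finset.sum_filter]
    apply Finset.sum_congr rfl
    intro i _
    by_cases hij : f i = j
    · simp [hij, hx]
    · simp [hij, Ne.symm hij, hx]
  have hyS : ∀ j, y j = -S := by
    intro j
    obtain ⟨i0, hi0⟩ := hcols j
    have hfij : f i0 = j := by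
      rcases hR01 i0 j with h0 | h1
      · exact absurd h0 hi0
      · exact (hf' i0 j h1).symm
    have hcard : (0 : ℝ) < (Finset.univ.filter (fun i => f i = j)).card := by
      have : i0 ∈ Finset.univ.filter (fun i => f i = j) := by
        simp [hfij]
      exact_mod_cast Finset.card_pos.mpr ⟨i0, this⟩
    have h2 := hE2 j
    have : ∑ i ∈ Finset.univ.filter (fun i => f i = j), x i
        = (Finset.univ.filter (fun i => f i = j)).card * (S + y j) := by
      rw [Finset.sum_congr rfl (fun i hi => by
        rw [hE1 i, (Finset.mem_filter.mp hi).2])]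
      rw [Finset.sum_const, nsmul_eq_mul]
    rw [this] at h2
    have := mul_eq_zero.mp h2
    rcases this with h | h
    · exact absurd h (ne_of_gt hcard)
    · linarith
  have hx0 : ∀ i, x i = 0 := by
    intro i
    rw [hE1 i, hyS (f i)]; ring
  have hS0 : S = 0 := by
    rw [hS]
    exact Finset.sum_eq_zero fun i _ => hx0 i
  have hy0 : ∀ j, y j = 0 := fun j => by rw [hyS j, hS0]; ring
  apply hv0
  funext w
  cases w with
  | inl i => exact hx0 i
  | inr j => exact hy0 j
end

section
/- Let G be a finite simple graph that is split (its vertex set can be partitioned into a clique and an independent set) and unbalanced, i.e., ω(G) + α(G) = |V(G)| + 1, where ω(G) is the clique number and α(G) the independence number. Then: (1) for every clique K of G with |K| = ω(G), the complement V(G) \ K is an independent set of G; and (2) for every independent set S of G with |S| = α(G), the complement V(G) \ S is a clique of G. In particular, every maximum clique and every maximum independent set participates in an s-partition of G. -/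
open Matrix

/-- A set of vertices is independent if no two of its elements are adjacent. -/
def IsIndepSet {V : Type*} (G : SimpleGraph V) (t : Set V) : Prop :=
  t.Pairwise fun u v => ¬ G.Adj u v


lemma clique_inter_indep_card_le_one {V : Type*} [DecidableEq V] (G : SimpleGraph V)
    (K S : Finset V) (hK : G.IsClique (K : Set V)) (hS : IsIndepSet G (S : Set V)) :
    (K ∩ S).card ≤ 1 := by
  rw [Finset.card_le_one]
  intro x hx y hy
  simp only [Finset.mem_inter] at hx hy
  by_contra hne
  exact hS (by exact_mod_cast hx.2) (by exact_mod_cast hy.2) hne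
    (hK (by exact_mod_cast hx.1) (by exact_mod_cast hy.1) hne)

/-- Let `G` be a split graph (its vertex set splits into a
clique and an independent set) which is unbalanced, i.e. `ω + α = |V| + 1`,
where `w = ω(G)` is the clique number and `a = α(G)` the independence number.
Then the complement of every maximum clique is an independent set and the
complement of every maximum independent set is a clique; in particular every
maximum clique and every maximum independent set participates in an
s-partition of `G`. -/
theorem stmt_13 {V : Type*} [Fintype V] [DecidableEq V] (G : SimpleGraph V)
    (w a : ℕ)
    (hw_exists : ∃ K : Finset V, G.IsClique (K : Set V) ∧ K.card = w)
    (hw_max : ∀ K : Finset V, G.IsClique (K : Set V) → K.card ≤ w)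
    (ha_exists : ∃ S : Finset V, IsIndepSet G (S : Set V) ∧ S.card = a)
    (ha_max : ∀ S : Finset V, IsIndepSet G (S : Set V) → S.card ≤ a)
    (hsplit : ∃ K S : Finset V, Disjoint K S ∧ K ∪ S = Finset.univ ∧
      G.IsClique (K : Set V) ∧ IsIndepSet G (S : Set V))
    (hunb : w + a = Fintype.card V + 1) :
    (∀ K : Finset V, G.IsClique (K : Set V) → K.card = w →
      IsIndepSet G ((Finset.univ \ K : Finset V) : Set V)) ∧
    (∀ S : Finset V, IsIndepSet G (S : Set V) → S.card = a →
      G.IsClique ((Finset.univ \ S : Finset V) : Set V)) := by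
  obtain ⟨K₀, hK₀, hK₀w⟩ := hw_exists
  obtain ⟨S₀, hS₀, hS₀a⟩ := ha_exists
  have hn : w ≤ Fintype.card V := by
    rw [← hK₀w]; exact Finset.card_le_univ _
  have hm : a ≤ Fintype.card V := by
    rw [← hS₀a]; exact Finset.card_le_univ _
  constructor
  · intro K hK hKw
    have h1 : (S₀ ∩ K).card ≤ 1 := by
      rw [Finset.inter_comm]; exact clique_inter_indep_card_le_one G K S₀ hK hS₀
    have h2 : S₀ \ K ⊆ Finset.univ \ K := fun x hx => by
      simp only [Finset.mem_sdiff] at hx ⊢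
      exact ⟨Finset.mem_univ x, hx.2⟩
    have hc1 : (S₀ \ K).card + (S₀ ∩ K).card = S₀.card :=
      Finset.card_sdiff_add_card_inter S₀ K
    have hc2 : (Finset.univ \ K).card = Fintype.card V - w := by
      rw [Finset.card_sdiff_of_subset (Finset.subset_univ K), hKw, Finset.card_univ]
    have hle : (Finset.univ \ K).card ≤ (S₀ \ K).card := by omega
    have heq : S₀ \ K = Finset.univ \ K := Finset.eq_of_subset_of_card_le h2 hle
    have hsub : Finset.univ \ K ⊆ S₀ := heq ▸ Finset.sdiff_subset
    exact hS₀.mono (Finset.coe_subset.mpr hsub)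
  · intro S hS hSa
    have h1 : (K₀ ∩ S).card ≤ 1 := clique_inter_indep_card_le_one G K₀ S hK₀ hS
    have h2 : K₀ \ S ⊆ Finset.univ \ S := fun x hx => by
      simp only [Finset.mem_sdiff] at hx ⊢
      exact ⟨Finset.mem_univ x, hx.2⟩
    have hc1 : (K₀ \ S).card + (K₀ ∩ S).card = K₀.card :=
      Finset.card_sdiff_add_card_inter K₀ S
    have hc2 : (Finset.univ \ S).card = Fintype.card V - a := by
      rw [Finset.card_sdiff_of_subset (Finset.subset_univ S), hSa, Finset.card_univ]
    have hle : (Finset.univ \ S).card ≤ (K₀ \ S).card := by omega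
    have heq : K₀ \ S = Finset.univ \ S := Finset.eq_of_subset_of_card_le h2 hle
    have hsub : Finset.univ \ S ⊆ K₀ := heq ▸ Finset.sdiff_subset
    exact hK₀.subset (Finset.coe_subset.mpr hsub)
end

section
/- Let G be a finite simple graph that is split (its vertex set can be partitioned into a clique and an independent set) and unbalanced, i.e., ω(G) + α(G) = |V(G)| + 1. Let A be the adjacency matrix of G over ℝ. Then for every vector x ∈ ℝ^{V(G)} with A·x = 0 and every vertex v with x(v) ≠ 0, the vertex v belongs to every independent set of G of size α(G). In other words, the support of G is contained in the intersection of all maximum independent sets of G. -/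
open Matrix

lemma clique_indep_inter_card_le {V : Type*} [DecidableEq V] (G : SimpleGraph V)
    {K T : Finset V} (hK : G.IsClique (K : Set V)) (hT : IsIndepSet G (T : Set V)) :
    (K ∩ T).card ≤ 1 := by
  rw [Finset.card_le_one]
  intro u hu v hv
  by_contra hne
  rw [Finset.mem_inter] at hu hv
  exact hT (Finset.mem_coe.mpr hu.2) (Finset.mem_coe.mpr hv.2) hne
    (hK (Finset.mem_coe.mpr hu.1) (Finset.mem_coe.mpr hv.1) hne)

lemma card_split_aux {V : Type*} [Fintype V] [DecidableEq V] {K S T : Finset V}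
    (hd : Disjoint K S) (hu : K ∪ S = Finset.univ) :
    T.card = (T ∩ K).card + (T ∩ S).card := by
  have hdisj : Disjoint (T ∩ K) (T ∩ S) :=
    hd.mono Finset.inter_subset_right Finset.inter_subset_right
  rw [← Finset.card_union_of_disjoint hdisj, ← Finset.inter_union_distrib_left, hu,
    Finset.inter_univ]

/-- Let `G` be a split graph which is unbalanced, i.e.
`ω + α = |V| + 1` (`w = ω(G)` the clique number, `a = α(G)` the independence
number), and let `A` be its real adjacency matrix.  Then every vertex `v` in
the support of `G` (i.e. `x v ≠ 0` for some `x` with `A x = 0`) belongs to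
every maximum independent set of `G`. -/
theorem stmt_14 {V : Type*} [Fintype V] [DecidableEq V] (G : SimpleGraph V)
    [DecidableRel G.Adj]
    (w a : ℕ)
    (hw_exists : ∃ K : Finset V, G.IsClique (K : Set V) ∧ K.card = w)
    (hw_max : ∀ K : Finset V, G.IsClique (K : Set V) → K.card ≤ w)
    (ha_exists : ∃ S : Finset V, IsIndepSet G (S : Set V) ∧ S.card = a)
    (ha_max : ∀ S : Finset V, IsIndepSet G (S : Set V) → S.card ≤ a)
    (hsplit : ∃ K S : Finset V, Disjoint K S ∧ K ∪ S = Finset.univ ∧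
      G.IsClique (K : Set V) ∧ IsIndepSet G (S : Set V))
    (hunb : w + a = Fintype.card V + 1) :
    ∀ x : V → ℝ, (G.adjMatrix ℝ).mulVec x = 0 →
      ∀ v : V, x v ≠ 0 →
        ∀ S : Finset V, IsIndepSet G (S : Set V) → S.card = a → v ∈ S := by
  classical
  obtain ⟨K, S, hdis, huniv, hKcl, hSind⟩ := hsplit
  have hn : K.card + S.card = Fintype.card V := by
    rw [← Finset.card_union_of_disjoint hdis, huniv, Finset.card_univ]
  have hKca : K.card ≤ w := hw_max K hKcl
  have hSca : S.card ≤ a := ha_max S hSind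
  -- Step 1: find a good partition (K₀, S₀) with |S₀| = a and a vertex s₀ ∈ S₀
  -- adjacent to all of K₀.
  have key : ∃ (K₀ S₀ : Finset V) (s₀ : V), Disjoint K₀ S₀ ∧ K₀ ∪ S₀ = Finset.univ ∧
      G.IsClique (K₀ : Set V) ∧ IsIndepSet G (S₀ : Set V) ∧ S₀.card = a ∧
      s₀ ∈ S₀ ∧ ∀ u ∈ K₀, G.Adj s₀ u := by
    by_cases hc : S.card = a
    · -- (K, S) works: a maximum clique gives the vertex s₀.
      obtain ⟨K₁, hK₁cl, hK₁card⟩ := hw_exists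
      have hK₁split : K₁.card = (K₁ ∩ K).card + (K₁ ∩ S).card := card_split_aux hdis huniv
      have hK₁S : (K₁ ∩ S).card ≤ 1 := clique_indep_inter_card_le G hK₁cl hSind
      have hKK : (K₁ ∩ K).card ≤ K.card := Finset.card_le_card Finset.inter_subset_right
      have hKKeq : K₁ ∩ K = K :=
        Finset.eq_of_subset_of_card_le Finset.inter_subset_right (by omega)
      obtain ⟨s₀, hs₀⟩ := Finset.card_eq_one.mp (show (K₁ ∩ S).card = 1 by omega)
      have hs₀mem : s₀ ∈ K₁ ∩ S := by rw [hs₀]; exact Finset.mem_singleton_self s₀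
      rw [Finset.mem_inter] at hs₀mem
      refine ⟨K, S, s₀, hdis, huniv, hKcl, hSind, hc, hs₀mem.2, ?_⟩
      intro u huK
      have huK₁ : u ∈ K₁ := by
        have h' : u ∈ K₁ ∩ K := by rw [hKKeq]; exact huK
        exact (Finset.mem_inter.mp h').1
      have hne : s₀ ≠ u := by
        intro h
        exact (Finset.disjoint_right.mp hdis hs₀mem.2) (h ▸ huK)
      exact hK₁cl (Finset.mem_coe.mpr hs₀mem.1) (Finset.mem_coe.mpr huK₁) hne
    · -- move a vertex k₀ from K to S, using a maximum independent set.
      obtain ⟨S₁, hS₁ind, hS₁card⟩ := ha_exists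
      have hS₁split : S₁.card = (S₁ ∩ K).card + (S₁ ∩ S).card := card_split_aux hdis huniv
      have h1 : (S₁ ∩ K).card ≤ 1 := by
        rw [Finset.inter_comm]; exact clique_indep_inter_card_le G hKcl hS₁ind
      have h2 : (S₁ ∩ S).card ≤ S.card := Finset.card_le_card Finset.inter_subset_right
      have hSS : S₁ ∩ S = S :=
        Finset.eq_of_subset_of_card_le Finset.inter_subset_right (by omega)
      obtain ⟨k₀, hk⟩ := Finset.card_eq_one.mp (show (S₁ ∩ K).card = 1 by omega)
      have hk₀mem : k₀ ∈ S₁ ∩ K := by rw [hk]; exact Finset.mem_singleton_self k₀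
      rw [Finset.mem_inter] at hk₀mem
      have hS₁eq : S₁ = insert k₀ S := by
        have hun : (S₁ ∩ K) ∪ (S₁ ∩ S) = S₁ := by
          rw [← Finset.inter_union_distrib_left, huniv, Finset.inter_univ]
        rw [← hun, hk, hSS]
        exact (Finset.insert_eq _ _).symm
      refine ⟨K.erase k₀, S₁, k₀, ?_, ?_, ?_, hS₁ind, hS₁card, hk₀mem.1, ?_⟩
      · rw [hS₁eq, Finset.disjoint_insert_right]
        exact ⟨Finset.notMem_erase _ _, hdis.mono_left (Finset.erase_subset _ _)⟩
      · rw [hS₁eq, ← huniv]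
        ext u
        simp only [Finset.mem_union, Finset.mem_erase, Finset.mem_insert]
        by_cases h : u = k₀ <;> simp [h, hk₀mem.2]
      · exact hKcl.subset (by exact_mod_cast Finset.erase_subset _ _)
      · intro u hu
        have hu' := Finset.mem_erase.mp hu
        exact hKcl (Finset.mem_coe.mpr hk₀mem.2) (Finset.mem_coe.mpr hu'.2) (Ne.symm hu'.1)
  obtain ⟨K₀, S₀, s₀, hd, hu, hKc, hSi, hScard, hs₀S, hs₀adj⟩ := key
  intro x hx v hv S' hS'ind hS'card
  have hmemK : ∀ {u : V}, u ∉ S₀ → u ∈ K₀ := by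
    intro u h
    have : u ∈ K₀ ∪ S₀ := hu ▸ Finset.mem_univ u
    rcases Finset.mem_union.mp this with h' | h'
    · exact h'
    · exact absurd h' h
  have hadjK : ∀ {s u : V}, s ∈ S₀ → G.Adj s u → u ∈ K₀ := by
    intro s u hs hadj
    by_contra hK
    have huS : u ∈ S₀ := by
      have : u ∈ K₀ ∪ S₀ := hu ▸ Finset.mem_univ u
      rcases Finset.mem_union.mp this with h' | h'
      · exact absurd h' hK
      · exact h'
    exact hSi (Finset.mem_coe.mpr hs) (Finset.mem_coe.mpr huS) hadj.ne hadj
  have hrow : ∀ v : V, ∑ u ∈ G.neighborFinset v, x u = 0 := by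
    intro v
    have := congrFun hx v
    rwa [SimpleGraph.adjMatrix_mulVec_apply, Pi.zero_apply] at this
  -- ∑ over K₀ of x is zero, using s₀.
  have hNs₀ : G.neighborFinset s₀ = K₀ := by
    ext u
    simp only [SimpleGraph.mem_neighborFinset]
    exact ⟨fun h => hadjK hs₀S h, fun h => hs₀adj u h⟩
  have hsumK : ∑ u ∈ K₀, x u = 0 := by rw [← hNs₀]; exact hrow s₀
  have hNs : ∀ s ∈ S₀, G.neighborFinset s = K₀.filter (fun u => G.Adj s u) := by
    intro s hs
    ext u
    simp only [SimpleGraph.mem_neighborFinset, Finset.mem_filter]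
    exact ⟨fun h => ⟨hadjK hs h, h⟩, fun h => h.2⟩
  -- The key equation for vertices of K₀.
  have hequ : ∀ u ∈ K₀, x u = ∑ s ∈ S₀.filter (fun s => G.Adj u s), x s := by
    intro u huK
    have hN : G.neighborFinset u = (K₀.erase u) ∪ S₀.filter (fun s => G.Adj u s) := by
      ext u'
      simp only [SimpleGraph.mem_neighborFinset, Finset.mem_union, Finset.mem_erase,
        Finset.mem_filter]
      constructor
      · intro h
        by_cases h' : u' ∈ S₀
        · exact Or.inr ⟨h', h⟩
        · exact Or.inl ⟨h.ne', hmemK h'⟩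
      · rintro (⟨hne, hK'⟩ | ⟨_, h⟩)
        · exact hKc (Finset.mem_coe.mpr huK) (Finset.mem_coe.mpr hK') (Ne.symm hne)
        · exact h
    have hdisj : Disjoint (K₀.erase u) (S₀.filter (fun s => G.Adj u s)) :=
      hd.mono (Finset.erase_subset _ _) (Finset.filter_subset _ _)
    have h0 := hrow u
    rw [hN, Finset.sum_union hdisj] at h0
    have herase : x u + ∑ u' ∈ K₀.erase u, x u' = ∑ u' ∈ K₀, x u' :=
      Finset.add_sum_erase K₀ x huK
    rw [hsumK] at herase
    linarith
  -- kernel vectors vanish on K₀.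
  have hKzero : ∀ u ∈ K₀, x u = 0 := by
    have hsq : ∑ u ∈ K₀, x u * x u = 0 := by
      calc ∑ u ∈ K₀, x u * x u
          = ∑ u ∈ K₀, ∑ s ∈ S₀.filter (fun s => G.Adj u s), x u * x s := by
            refine Finset.sum_congr rfl fun u huK => ?_
            rw [← Finset.mul_sum, ← hequ u huK]
        _ = ∑ u ∈ K₀, ∑ s ∈ S₀, if G.Adj u s then x u * x s else 0 := by
            refine Finset.sum_congr rfl fun u _ => ?_
            rw [Finset.sum_filter]
        _ = ∑ s ∈ S₀, ∑ u ∈ K₀, if G.Adj u s then x u * x s else 0 := Finset.sum_comm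
        _ = ∑ s ∈ S₀, ∑ u ∈ K₀.filter (fun u => G.Adj s u), x u * x s := by
            refine Finset.sum_congr rfl fun s _ => ?_
            rw [Finset.sum_filter]
            refine Finset.sum_congr rfl fun u _ => ?_
            by_cases h : G.Adj u s
            · rw [if_pos h, if_pos h.symm]
            · rw [if_neg h, if_neg (fun h' => h h'.symm)]
        _ = ∑ s ∈ S₀, (∑ u ∈ K₀.filter (fun u => G.Adj s u), x u) * x s := by
            refine Finset.sum_congr rfl fun s _ => ?_
            rw [Finset.sum_mul]
        _ = 0 := by
            refine Finset.sum_eq_zero fun s hs => ?_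
            have h0 : ∑ u ∈ K₀.filter (fun u => G.Adj s u), x u = 0 := by
              rw [← hNs s hs]; exact hrow s
            rw [h0, zero_mul]
    intro u huK
    have := (Finset.sum_eq_zero_iff_of_nonneg
      (fun i _ => mul_self_nonneg (x i))).mp hsq u huK
    exact mul_self_eq_zero.mp this
  -- Conclusion.
  have hvS₀ : v ∈ S₀ := by
    by_contra h
    exact hv (hKzero v (hmemK h))
  by_contra hvS'
  have hsplitcard : S'.card = (S' ∩ K₀).card + (S' ∩ S₀).card := card_split_aux hd hu
  have h1 : (S' ∩ K₀).card ≤ 1 := by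
    rw [Finset.inter_comm]; exact clique_indep_inter_card_le G hKc hS'ind
  have hsub : S' ∩ S₀ ⊆ S₀.erase v := by
    intro s hs
    rw [Finset.mem_inter] at hs
    exact Finset.mem_erase.mpr ⟨fun h => hvS' (h ▸ hs.1), hs.2⟩
  have h2 : (S' ∩ S₀).card ≤ a - 1 := by
    have := Finset.card_le_card hsub
    rwa [Finset.card_erase_of_mem hvS₀, hScard] at this
  have ha1 : 1 ≤ a := hScard ▸ Finset.card_pos.mpr ⟨v, hvS₀⟩
  have hK1 : (S' ∩ K₀).card = 1 := by omega
  have hS2 : (S' ∩ S₀).card = a - 1 := by omega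
  have hSeq : S' ∩ S₀ = S₀.erase v :=
    Finset.eq_of_subset_of_card_le hsub
      (by rw [Finset.card_erase_of_mem hvS₀, hScard, hS2])
  obtain ⟨k, hk⟩ := Finset.card_eq_one.mp hK1
  have hkmem : k ∈ S' ∩ K₀ := by rw [hk]; exact Finset.mem_singleton_self k
  rw [Finset.mem_inter] at hkmem
  have hnonadj : ∀ s ∈ S₀, s ≠ v → ¬ G.Adj k s := by
    intro s hs hsv hadj
    have hsS' : s ∈ S' := by
      have : s ∈ S' ∩ S₀ := hSeq ▸ Finset.mem_erase.mpr ⟨hsv, hs⟩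
      exact (Finset.mem_inter.mp this).1
    exact hS'ind (Finset.mem_coe.mpr hkmem.1) (Finset.mem_coe.mpr hsS') hadj.ne hadj
  have hkS₀ : k ∉ S₀ := Finset.disjoint_left.mp hd hkmem.2
  by_cases hadj : G.Adj k v
  · -- then x k = x v ≠ 0, contradicting x k = 0.
    have hfil : S₀.filter (fun s => G.Adj k s) = {v} := by
      ext s
      simp only [Finset.mem_filter, Finset.mem_singleton]
      constructor
      · rintro ⟨hs, ha'⟩
        by_contra hne
        exact hnonadj s hs hne ha'
      · rintro rfl
        exact ⟨hvS₀, hadj⟩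
    have := hequ k hkmem.2
    rw [hfil, Finset.sum_singleton] at this
    rw [hKzero k hkmem.2] at this
    exact hv this.symm
  · -- then S₀ ∪ {k} is independent of size a + 1, contradiction.
    have hknot : ∀ s ∈ S₀, ¬ G.Adj k s := by
      intro s hs
      by_cases h : s = v
      · rw [h]; exact hadj
      · exact hnonadj s hs h
    have hind : IsIndepSet G ((insert k S₀ : Finset V) : Set V) := by
      intro p hp q hq hpq hA
      simp only [Finset.coe_insert, Set.mem_insert_iff, Finset.mem_coe] at hp hq
      rcases hp with rfl | hp
      · rcases hq with rfl | hq
        · exact hpq rfl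
        · exact hknot q hq hA
      · rcases hq with rfl | hq
        · exact hknot p hp hA.symm
        · exact hSi (Finset.mem_coe.mpr hp) (Finset.mem_coe.mpr hq) hpq hA
    have hcard := ha_max (insert k S₀) hind
    rw [Finset.card_insert_of_notMem hkS₀, hScard] at hcard
    omega
end

section
/- Assume k ≥ 2. If the clique-kernel ck(Sp) = ker(Rᵀ) ∩ range((I − J)⁻¹·R) is not the zero subspace, then its dimension equals exactly 1. In particular, dim ck(Sp) ≤ 1 always. -/
/-!
By the matrix determinant lemma `det (I - J) = 1 - k ≠ 0`, so for `x` in the clique-kernel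
we can write `(I - J) x = R y`. Since `Rᵀ x = 0`,
`‖x‖² - (∑ xᵢ)² = xᵀ (I - J) x = xᵀ R y = (Rᵀ x)ᵀ y = 0`, so a vector of the clique-kernel
with coordinate sum `0` vanishes. The coordinate-sum functional is therefore injective on
the clique-kernel, which has dimension at most `1`.
-/

open Matrix

namespace Matrix

theorem eq_replicateCol_mul_replicateRow_of_forall_eq_one {n α : Type*} [CommRing α]
    {J : Matrix n n α} (hJ : ∀ i j, J i j = 1) :
    J = replicateCol (Fin 1) (1 : n → α) * replicateRow (Fin 1) (1 : n → α) := by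
  ext i j
  simp [hJ, mul_apply]

variable {n m α : Type*} [Fintype n] [DecidableEq n] [CommRing α]

theorem det_one_sub_of_forall_eq_one {J : Matrix n n α} (hJ : ∀ i j, J i j = 1) :
    (1 - J).det = 1 - Fintype.card n := by
  rw [eq_replicateCol_mul_replicateRow_of_forall_eq_one hJ, det_one_sub_mul_comm, det_unique]
  simp

theorem dotProduct_one_sub_mulVec_of_forall_eq_one {J : Matrix n n α}
    (hJ : ∀ i j, J i j = 1) (x : n → α) :
    x ⬝ᵥ ((1 - J) *ᵥ x) = x ⬝ᵥ x - (∑ i, x i) ^ 2 := by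
  have hJx : J *ᵥ x = fun _ => ∑ i, x i := by
    ext
    simp [mulVec, dotProduct, hJ]
  rw [sub_mulVec, one_mulVec, dotProduct_sub, hJx]
  simp [dotProduct, Finset.sum_mul, sq]

theorem dotProduct_mulVec_eq_zero_of_mem_ker_inf_range [Fintype m] {M : Matrix n n α}
    (hM : IsUnit M.det) {R : Matrix n m α} {x : n → α}
    (hx : x ∈ LinearMap.ker (mulVecLin Rᵀ) ⊓ LinearMap.range (mulVecLin (M⁻¹ * R))) :
    x ⬝ᵥ (M *ᵥ x) = 0 := by
  obtain ⟨hker, y, rfl⟩ := hx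
  have hRx : Rᵀ *ᵥ ((M⁻¹ * R) *ᵥ y) = 0 := hker
  rw [mulVecLin_apply, mulVec_mulVec, ← Matrix.mul_assoc, mul_nonsing_inv M hM, Matrix.one_mul,
    dotProduct_mulVec, ← mulVec_transpose, hRx, zero_dotProduct]

end Matrix

theorem Submodule.finrank_le_one_of_disjoint_ker {K V : Type*} [Field K] [AddCommGroup V]
    [Module K V] {W : Submodule K V} (f : V →ₗ[K] K) (h : Disjoint W (LinearMap.ker f)) :
    Module.finrank K W ≤ 1 := by
  simpa using LinearMap.finrank_le_finrank_of_injective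
    (LinearMap.injective_domRestrict_iff.mpr h)

theorem stmt_16_general (k s : ℕ) (hk : 2 ≤ k)
    (R : Matrix (Fin k) (Fin s) ℝ)
    (J : Matrix (Fin k) (Fin k) ℝ) (hJ : ∀ i j, J i j = 1)
    (ck : Submodule ℝ (Fin k → ℝ))
    (hck : ck = LinearMap.ker (Matrix.mulVecLin Rᵀ) ⊓
      LinearMap.range (Matrix.mulVecLin ((1 - J)⁻¹ * R))) :
    (ck ≠ ⊥ → Module.finrank ℝ ck = 1) ∧ Module.finrank ℝ ck ≤ 1 := by
  have hdet : IsUnit (1 - J).det := by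
    rw [det_one_sub_of_forall_eq_one hJ, Fintype.card_fin, isUnit_iff_ne_zero, sub_ne_zero]
    exact_mod_cast (by omega : 1 ≠ k)
  let coordSum := Fintype.linearCombination ℝ (fun _ : Fin k => (1 : ℝ))
  have hdisj : Disjoint ck (LinearMap.ker coordSum) := by
    refine Submodule.disjoint_def.mpr fun x hx hx0 => ?_
    have hsum : ∑ i, x i = 0 := by simpa [coordSum, Fintype.linearCombination_apply] using hx0
    have hquad := dotProduct_mulVec_eq_zero_of_mem_ker_inf_range hdet (hck ▸ hx)
    rw [dotProduct_one_sub_mulVec_of_forall_eq_one hJ, hsum] at hquad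
    exact dotProduct_self_eq_zero.mp (by simpa using hquad)
  have hle := Submodule.finrank_le_one_of_disjoint_ker coordSum hdisj
  exact ⟨fun hne => le_antisymm hle (Submodule.one_le_finrank_iff.mpr hne), hle⟩

/-- For `k ≥ 2`, if the clique-kernel
`ck(Sp) = ker(Rᵀ) ∩ range((I - J)⁻¹ R)` is not the zero subspace then its
dimension is exactly `1`; in particular `dim ck(Sp) ≤ 1` always. -/
theorem stmt_16 (k s : ℕ) (hk : 2 ≤ k)
    (R : Matrix (Fin k) (Fin s) ℝ) (hR01 : ∀ i j, R i j = 0 ∨ R i j = 1)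
    (J : Matrix (Fin k) (Fin k) ℝ) (hJ : ∀ i j, J i j = 1)
    (ck : Submodule ℝ (Fin k → ℝ))
    (hck : ck = LinearMap.ker (Matrix.mulVecLin Rᵀ) ⊓
      LinearMap.range (Matrix.mulVecLin ((1 - J)⁻¹ * R))) :
    (ck ≠ ⊥ → Module.finrank ℝ ck = 1) ∧ Module.finrank ℝ ck ≤ 1 :=
  stmt_16_general k s hk R J hJ ck hck
end

section
/- Suppose there exists a vector (x_K, x_S) ∈ ℝᵏ × ℝˢ with A·(x_K, x_S) = 0 and x_K ≠ 0 (i.e., the support of the split graph meets the clique K). Then the nullity of A equals the nullity of R plus one: nul(A) = nul(R) + 1. -/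
open Matrix

set_option maxHeartbeats 1000000
set_option synthInstance.maxHeartbeats 400000

/-- If the split graph has a kernel vector `(x_K, x_S)` with
`x_K ≠ 0` (the support meets the clique), then `nul(A) = nul(R) + 1`. -/
theorem stmt_17 (k s : ℕ)
    (R : Matrix (Fin k) (Fin s) ℝ) (hR01 : ∀ i j, R i j = 0 ∨ R i j = 1)
    (J : Matrix (Fin k) (Fin k) ℝ) (hJ : ∀ i j, J i j = 1)
    (A : Matrix (Fin k ⊕ Fin s) (Fin k ⊕ Fin s) ℝ)
    (hA : A = Matrix.fromBlocks (J - 1) R Rᵀ 0)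
    (hsupp : ∃ (xK : Fin k → ℝ) (xS : Fin s → ℝ),
      A.mulVec (Sum.elim xK xS) = 0 ∧ xK ≠ 0) :
    Module.finrank ℝ (LinearMap.ker A.mulVecLin) =
      Module.finrank ℝ (LinearMap.ker R.mulVecLin) + 1 := by
  classical
  obtain ⟨x₀, y₀, h₀, hx₀⟩ := hsupp
  -- block decomposition of kernel equations
  have hblocks : ∀ v : (Fin k ⊕ Fin s) → ℝ, A.mulVec v = 0 →
      (J - 1).mulVec (v ∘ Sum.inl) + R.mulVec (v ∘ Sum.inr) = 0 ∧
      Rᵀ.mulVec (v ∘ Sum.inl) = 0 := by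
    intro v hv
    have hv' : A.mulVec (Sum.elim (v ∘ Sum.inl) (v ∘ Sum.inr)) = 0 := by
      rwa [Sum.elim_comp_inl_inr]
    rw [hA, Matrix.fromBlocks_mulVec] at hv'
    constructor
    · funext i; exact congrFun hv' (Sum.inl i)
    · funext j
      have := congrFun hv' (Sum.inr j)
      simpa using this
  -- first block pointwise
  have hx_eq : ∀ v : (Fin k ⊕ Fin s) → ℝ, A.mulVec v = 0 → ∀ i,
      v (Sum.inl i) = (∑ j, v (Sum.inl j)) + R.mulVec (v ∘ Sum.inr) i := by
    intro v hv i
    have h1 := congrFun (hblocks v hv).1 i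
    simp only [Pi.add_apply, Pi.zero_apply, Matrix.mulVec, dotProduct,
      Matrix.sub_apply, Matrix.one_apply, hJ, sub_mul, one_mul, ite_mul,
      zero_mul, Finset.sum_sub_distrib, Finset.sum_ite_eq, Finset.mem_univ,
      if_true, Function.comp_apply] at h1
    have h2 : (R.mulVec (v ∘ Sum.inr)) i = ∑ j, R i j * v (Sum.inr j) := rfl
    rw [h2]
    linarith
  -- key inner product identity
  have hdot : ∀ v w : (Fin k ⊕ Fin s) → ℝ, A.mulVec v = 0 → A.mulVec w = 0 →
      (∑ i, w (Sum.inl i) * v (Sum.inl i)) =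
        (∑ i, v (Sum.inl i)) * (∑ i, w (Sum.inl i)) := by
    intro v w hv hw
    have h2w := (hblocks w hw).2
    have hterm : ∀ i, w (Sum.inl i) * v (Sum.inl i) =
        w (Sum.inl i) * (∑ j, v (Sum.inl j)) +
          w (Sum.inl i) * R.mulVec (v ∘ Sum.inr) i := by
      intro i; rw [← mul_add, ← hx_eq v hv i]
    rw [Finset.sum_congr rfl (fun i _ => hterm i), Finset.sum_add_distrib,
      ← Finset.sum_mul]
    have hzero : (∑ i, w (Sum.inl i) * R.mulVec (v ∘ Sum.inr) i) = 0 := by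
      have hrw : (∑ i, w (Sum.inl i) * R.mulVec (v ∘ Sum.inr) i)
          = (w ∘ Sum.inl) ⬝ᵥ (R.mulVec (v ∘ Sum.inr)) := rfl
      rw [hrw, Matrix.dotProduct_mulVec, ← Matrix.mulVec_transpose, h2w,
        zero_dotProduct]
    rw [hzero, add_zero, mul_comm]
  -- the given kernel vector
  set v₀ : (Fin k ⊕ Fin s) → ℝ := Sum.elim x₀ y₀ with hv₀def
  have hv₀ : A.mulVec v₀ = 0 := h₀
  have hv₀inl : ∀ i, v₀ (Sum.inl i) = x₀ i := fun i => rfl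
  set σ₀ : ℝ := ∑ j, x₀ j with hσ₀def
  have hself : (∑ i, x₀ i * x₀ i) = σ₀ * σ₀ := by
    have := hdot v₀ v₀ hv₀ hv₀
    simpa [hv₀inl] using this
  have hσ₀ : σ₀ ≠ 0 := by
    intro h
    apply hx₀
    have hzero : (∑ i, x₀ i * x₀ i) = 0 := by rw [hself, h, mul_zero]
    have := (Finset.sum_eq_zero_iff_of_nonneg
      (fun i _ => mul_self_nonneg (x₀ i))).mp hzero
    funext i
    exact mul_self_eq_zero.mp (this i (Finset.mem_univ i))
  -- linear maps
  set p : ((Fin k ⊕ Fin s) → ℝ) →ₗ[ℝ] (Fin k → ℝ) :=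
    LinearMap.funLeft ℝ ℝ Sum.inl with hpdef
  set g : (LinearMap.ker A.mulVecLin) →ₗ[ℝ] (Fin k → ℝ) :=
    p ∘ₗ (LinearMap.ker A.mulVecLin).subtype with hgdef
  have hgapply : ∀ u : LinearMap.ker A.mulVecLin,
      g u = (u : (Fin k ⊕ Fin s) → ℝ) ∘ Sum.inl := fun u => rfl
  have hv₀mem : v₀ ∈ LinearMap.ker A.mulVecLin := by
    rw [LinearMap.mem_ker, Matrix.mulVecLin_apply]; exact hv₀
  -- range of g is span of x₀
  have hrange : LinearMap.range g = Submodule.span ℝ {x₀} := by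
    apply le_antisymm
    · rintro x ⟨⟨v, hv⟩, rfl⟩
      have hvA : A.mulVec v = 0 := by
        rw [LinearMap.mem_ker, Matrix.mulVecLin_apply] at hv; exact hv
      set σv : ℝ := ∑ j, v (Sum.inl j) with hσvdef
      have h1 : (∑ i, v (Sum.inl i) * v (Sum.inl i)) = σv * σv :=
        hdot v v hvA hvA
      have h2 : (∑ i, v (Sum.inl i) * x₀ i) = σ₀ * σv := by
        have := hdot v₀ v hv₀ hvA
        simpa [hv₀inl] using this
      -- proportionality via sum of squares
      have hsq : (∑ i, (σ₀ * v (Sum.inl i) - σv * x₀ i) *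
          (σ₀ * v (Sum.inl i) - σv * x₀ i)) = 0 := by
        have hexp : ∀ i, (σ₀ * v (Sum.inl i) - σv * x₀ i) *
            (σ₀ * v (Sum.inl i) - σv * x₀ i) =
            σ₀ * σ₀ * (v (Sum.inl i) * v (Sum.inl i)) -
              2 * σ₀ * σv * (v (Sum.inl i) * x₀ i) +
              σv * σv * (x₀ i * x₀ i) := by intro i; ring
        rw [Finset.sum_congr rfl (fun i _ => hexp i), Finset.sum_add_distrib,
          Finset.sum_sub_distrib, ← Finset.mul_sum, ← Finset.mul_sum,
          ← Finset.mul_sum, h1, h2, hself]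
        ring
      have hpts := (Finset.sum_eq_zero_iff_of_nonneg
        (fun i _ => mul_self_nonneg _)).mp hsq
      rw [Submodule.mem_span_singleton]
      refine ⟨σv / σ₀, ?_⟩
      funext i
      have hi : σ₀ * v (Sum.inl i) - σv * x₀ i = 0 :=
        mul_self_eq_zero.mp (hpts i (Finset.mem_univ i))
      have : g ⟨v, hv⟩ i = v (Sum.inl i) := rfl
      rw [Pi.smul_apply, this, smul_eq_mul]
      field_simp
      linarith
    · rw [Submodule.span_le, Set.singleton_subset_iff]
      exact ⟨⟨v₀, hv₀mem⟩, by funext i; rfl⟩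
  have hrank1 : Module.finrank ℝ (LinearMap.range g) = 1 := by
    rw [hrange]
    exact finrank_span_singleton hx₀
  -- kernel of g is isomorphic to kernel of R
  -- auxiliary linear map
  set inr0 : (Fin s → ℝ) →ₗ[ℝ] ((Fin k ⊕ Fin s) → ℝ) :=
    { toFun := fun y => Sum.elim (0 : Fin k → ℝ) y
      map_add' := by intro y z; funext i; cases i <;> simp
      map_smul' := by intro c y; funext i; cases i <;> simp } with hinr0def
  have hFmem : ∀ u : LinearMap.ker g,
      ((u : LinearMap.ker A.mulVecLin) : (Fin k ⊕ Fin s) → ℝ) ∘ Sum.inr ∈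
        LinearMap.ker R.mulVecLin := by
    rintro ⟨⟨v, hv⟩, hgv⟩
    have hvA : A.mulVec v = 0 := by
      rw [LinearMap.mem_ker, Matrix.mulVecLin_apply] at hv; exact hv
    have hinl : v ∘ Sum.inl = 0 := hgv
    have h1 := (hblocks v hvA).1
    rw [hinl, Matrix.mulVec_zero, zero_add] at h1
    rw [LinearMap.mem_ker, Matrix.mulVecLin_apply]
    exact h1
  set F : (LinearMap.ker g) →ₗ[ℝ] (LinearMap.ker R.mulVecLin) :=
    LinearMap.codRestrict _
      ((LinearMap.funLeft ℝ ℝ Sum.inr) ∘ₗ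
        ((LinearMap.ker A.mulVecLin).subtype ∘ₗ (LinearMap.ker g).subtype))
      hFmem with hFdef
  have hGmemA : ∀ y : LinearMap.ker R.mulVecLin,
      Sum.elim (0 : Fin k → ℝ) (y : Fin s → ℝ) ∈ LinearMap.ker A.mulVecLin := by
    rintro ⟨y, hy⟩
    rw [LinearMap.mem_ker, Matrix.mulVecLin_apply] at hy ⊢
    rw [hA, Matrix.fromBlocks_mulVec]
    simp [hy]
  set G₁ : (LinearMap.ker R.mulVecLin) →ₗ[ℝ] (LinearMap.ker A.mulVecLin) :=
    LinearMap.codRestrict _ (inr0 ∘ₗ (LinearMap.ker R.mulVecLin).subtype)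
      hGmemA with hG₁def
  have hGmemg : ∀ y : LinearMap.ker R.mulVecLin, G₁ y ∈ LinearMap.ker g := by
    intro y
    rw [LinearMap.mem_ker]
    funext i
    rfl
  set G : (LinearMap.ker R.mulVecLin) →ₗ[ℝ] (LinearMap.ker g) :=
    LinearMap.codRestrict _ G₁ hGmemg with hGdef
  have hFG : F ∘ₗ G = LinearMap.id := by
    apply LinearMap.ext
    intro y
    apply Subtype.ext
    funext j
    rfl
  have hGF : G ∘ₗ F = LinearMap.id := by
    apply LinearMap.ext
    rintro ⟨⟨v, hv⟩, hgv⟩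
    apply Subtype.ext
    apply Subtype.ext
    funext i
    cases i with
    | inl i =>
      have hinl : v ∘ Sum.inl = 0 := hgv
      exact (congrFun hinl i).symm
    | inr j => rfl
  have hkerEquiv : Nonempty ((LinearMap.ker g) ≃ₗ[ℝ] (LinearMap.ker R.mulVecLin)) :=
    ⟨LinearEquiv.ofLinear F G hFG hGF⟩
  have hkerrank : Module.finrank ℝ (LinearMap.ker g) =
      Module.finrank ℝ (LinearMap.ker R.mulVecLin) :=
    hkerEquiv.some.finrank_eq
  have hrn := LinearMap.finrank_range_add_finrank_ker g
  rw [hrank1, hkerrank] at hrn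
  omega
end

section
/- Let G be a finite simple graph whose real adjacency matrix A has nullity exactly 1 (the kernel of x ↦ A·x is one-dimensional). Then for every vertex v, the following are equivalent: (i) there exists x ∈ ℝ^{V(G)} with A·x = 0 and x(v) ≠ 0 (v is in the support of G); (ii) the principal submatrix of A obtained by deleting row v and column v (the adjacency matrix of G − v) has nonzero determinant. -/
open Matrix

private lemma sum_split {V : Type*} [Fintype V] [DecidableEq V] (v : V) (f : V → ℝ) :
    ∑ u : V, f u = f v + ∑ u : {w : V // w ≠ v}, f u := by
  have h : ∑ u : {w : V // w ≠ v}, f u = ∑ u ∈ Finset.univ.erase v, f u :=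
    (Finset.sum_subtype (Finset.univ.erase v)
      (fun x => by simp [Finset.mem_erase]) f).symm
  rw [h, Finset.add_sum_erase _ _ (Finset.mem_univ v)]

/-- Let `G` be a finite simple graph whose real adjacency
matrix `A` has nullity exactly `1`.  Then a vertex `v` is in the support of `G`
(i.e. `x v ≠ 0` for some kernel vector `x` of `A`) iff the principal submatrix
of `A` obtained by deleting the row and column of `v` (the adjacency matrix of
`G - v`) has nonzero determinant. -/
theorem stmt_18 {V : Type*} [Fintype V] [DecidableEq V] (G : SimpleGraph V)
    [DecidableRel G.Adj]
    (hnul : Module.finrank ℝ (LinearMap.ker (G.adjMatrix ℝ).mulVecLin) = 1)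
    (v : V) :
    (∃ x : V → ℝ, (G.adjMatrix ℝ).mulVec x = 0 ∧ x v ≠ 0) ↔
      ((G.adjMatrix ℝ).submatrix
          (fun i : {w : V // w ≠ v} => (i : V))
          (fun j : {w : V // w ≠ v} => (j : V))).det ≠ 0 := by
  classical
  set A := G.adjMatrix ℝ with hA
  set B := A.submatrix (fun i : {w : V // w ≠ v} => (i : V))
      (fun j : {w : V // w ≠ v} => (j : V)) with hB
  obtain ⟨x₀, hx₀ne, hx₀gen⟩ := finrank_eq_one_iff'.mp hnul
  have hx₀ker : A.mulVec x₀.1 = 0 := x₀.2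
  constructor
  · rintro ⟨x, hx, hxv⟩
    intro hdet
    rw [← Matrix.exists_mulVec_eq_zero_iff] at hdet
    obtain ⟨y, hy, hBy⟩ := hdet
    set yext : V → ℝ := fun u => if h : u = v then 0 else y ⟨u, h⟩ with hyext
    -- rows w ≠ v of A.mulVec yext vanish
    have hrow : ∀ w : V, w ≠ v → (A.mulVec yext) w = 0 := by
      intro w hw
      have : (A.mulVec yext) w = (B.mulVec y) ⟨w, hw⟩ := by
        simp only [Matrix.mulVec, dotProduct, hB, Matrix.submatrix_apply]
        rw [sum_split v (fun u => A w u * yext u)]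
        simp only [hyext, dif_pos rfl, mul_zero, zero_add]
        exact Finset.sum_congr rfl fun u _ => by rw [dif_neg u.2]
      rw [this, hBy]
      rfl
    -- row v vanishes via symmetry
    have hsym : A.vecMul x = A.mulVec x := by
      rw [← Matrix.mulVec_transpose, hA, SimpleGraph.transpose_adjMatrix]
    have hdp : x ⬝ᵥ A.mulVec yext = 0 := by
      rw [Matrix.dotProduct_mulVec, hsym, hx]
      simp
    have hrowv : (A.mulVec yext) v = 0 := by
      have : x ⬝ᵥ A.mulVec yext = x v * (A.mulVec yext) v := by
        unfold dotProduct
        rw [sum_split v (fun u => x u * (A.mulVec yext) u)]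
        rw [Finset.sum_eq_zero (fun u _ => by rw [hrow u.1 u.2, mul_zero]), add_zero]
      rw [this] at hdp
      exact (mul_eq_zero.mp hdp).resolve_left hxv
    have hker : A.mulVec yext = 0 := by
      funext w
      by_cases hw : w = v
      · rw [hw]; exact hrowv
      · exact hrow w hw
    -- yext and x are both multiples of x₀
    obtain ⟨c, hc⟩ := hx₀gen ⟨yext, by simpa [Matrix.mulVecLin_apply] using hker⟩
    obtain ⟨d, hd⟩ := hx₀gen ⟨x, by simpa [Matrix.mulVecLin_apply] using hx⟩
    have hcv : c * x₀.1 v = yext v := congrFun (congrArg Subtype.val hc) v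
    have hdv : d * x₀.1 v = x v := congrFun (congrArg Subtype.val hd) v
    have hyextv : yext v = 0 := by simp [hyext]
    have hx₀v : x₀.1 v ≠ 0 := by
      intro h0
      apply hxv
      rw [← hdv, h0, mul_zero]
    have hc0 : c = 0 := by
      rcases mul_eq_zero.mp (hcv.trans hyextv) with h | h
      · exact h
      · exact absurd h hx₀v
    have hyext0 : yext = 0 := by
      have hyy : c • (x₀ : V → ℝ) = yext := congrArg Subtype.val hc
      rw [← hyy]
      funext u; simp [hc0]
    apply hy
    funext u
    have := congrFun hyext0 u.1
    simpa [hyext, u.2] using this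
  · intro hdet
    refine ⟨x₀.1, hx₀ker, ?_⟩
    intro hx₀v
    set y : {w : V // w ≠ v} → ℝ := fun u => x₀.1 u.1 with hy
    have hBy : B.mulVec y = 0 := by
      funext w
      have h1 : (A.mulVec x₀.1) w.1 = 0 := congrFun hx₀ker w.1
      have h2 : (A.mulVec x₀.1) w.1 = A w.1 v * x₀.1 v + (B.mulVec y) w := by
        simp only [Matrix.mulVec, dotProduct, hB, Matrix.submatrix_apply]
        rw [sum_split v (fun u => A w.1 u * x₀.1 u)]
      rw [h2, hx₀v, mul_zero, zero_add] at h1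
      rw [h1]; rfl
    have hy0 : y = 0 := by
      by_contra hy0
      exact hdet (Matrix.exists_mulVec_eq_zero_iff.mp ⟨y, hy0, hBy⟩)
    apply hx₀ne
    apply Subtype.ext
    funext u
    by_cases hu : u = v
    · rw [hu]; exact hx₀v
    · exact congrFun hy0 ⟨u, hu⟩
end

section
/- Let k ≥ 2, let A = fromBlocks (J − I) R Rᵀ 0 be the adjacency matrix of a split graph with s-partition of sizes k and s, and let r = Rᵀ·𝟙 ∈ ℝˢ be the vector of column sums of R. Then det(A) = (−1)^{k−1}·(k−1)·det(RᵀR − (1/(k−1))·r·rᵀ). Furthermore, if ker(R) = {0}, then det(RᵀR − (1/(k−1))·r·rᵀ) = (1 − (1/(k−1))·rᵀ·(RᵀR)⁻¹·r)·det(RᵀR). -/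
/-!
Write `J = vecMulVec 1 1` for the `k × k` all-ones matrix. By the matrix determinant lemma
`det (J - 1) = (-1)^k (1 - k)`, and since `J * J = k • J` the inverse of `J - 1` is
`(k - 1)⁻¹ • J - 1`. The Schur complement of `J - 1` in `A` is therefore
`Rᵀ R - (k - 1)⁻¹ • Rᵀ J R = Rᵀ R - (k - 1)⁻¹ • r rᵀ`, which gives the first formula. When `R`
is injective, so is the Gram matrix `Rᵀ R`, and the second formula is the matrix determinant
lemma for the rank-one perturbation `-(k - 1)⁻¹ • r rᵀ` of `Rᵀ R`.
-/

open Matrix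

namespace Matrix

section CommRing

variable {m K : Type*} [Fintype m] [DecidableEq m] [CommRing K]

theorem det_add_vecMulVec {A : Matrix m m K} (hA : IsUnit A.det) (u v : m → K) :
    (A + vecMulVec u v).det = (1 + v ⬝ᵥ A⁻¹ *ᵥ u) * A.det := by
  rw [vecMulVec_eq (Fin 1), det_add_mul _ _ hA, mul_comm, det_unique, Matrix.mul_assoc,
    ← replicateCol_mulVec]
  simp [replicateRow_mul_replicateCol_apply]

theorem det_one_add_vecMulVec (u v : m → K) :
    (1 + vecMulVec u v).det = 1 + v ⬝ᵥ u := by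
  simpa using det_add_vecMulVec (A := (1 : Matrix m m K)) (by simp) u v

theorem det_sub_smul_vecMulVec_self {A : Matrix m m K} (hA : IsUnit A.det) (c : K) (r : m → K) :
    (A - c • vecMulVec r r).det = (1 - c * (r ⬝ᵥ A⁻¹ *ᵥ r)) * A.det := by
  rw [sub_eq_add_neg, ← neg_smul, ← smul_vecMulVec, det_add_vecMulVec hA, mulVec_smul,
    dotProduct_smul, smul_eq_mul]
  ring

end CommRing

section AllOnes

variable {m n K : Type*} [Fintype m] [DecidableEq m] [Fintype n] [DecidableEq n] [Field K]

theorem det_vecMulVec_one_one_sub_one :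
    (vecMulVec 1 1 - 1 : Matrix m m K).det = (-1) ^ Fintype.card m * (1 - Fintype.card m) := by
  rw [← neg_sub, det_neg, sub_eq_add_neg, ← neg_vecMulVec, det_one_add_vecMulVec]
  simp [sub_eq_add_neg]

theorem inv_vecMulVec_one_one_sub_one (hm : (Fintype.card m : K) ≠ 1) :
    (vecMulVec 1 1 - 1 : Matrix m m K)⁻¹ = ((Fintype.card m : K) - 1)⁻¹ • vecMulVec 1 1 - 1 := by
  set N : K := (Fintype.card m : K)
  have hc : (N - 1)⁻¹ * N = 1 + (N - 1)⁻¹ := by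
    field_simp [sub_ne_zero.mpr hm]
    ring
  have hJJ : (vecMulVec 1 1 : Matrix m m K) * vecMulVec 1 1 = N • vecMulVec 1 1 := by
    rw [vecMulVec_mul_vecMulVec, one_dotProduct, ← smul_vecMulVec, vecMulVec_smul]
    simp [N]
  apply inv_eq_right_inv
  rw [sub_mul, mul_sub, mul_sub, mul_smul_comm, hJJ, smul_smul, hc, add_smul, one_smul, one_mul,
    mul_one, mul_one]
  abel

theorem det_fromBlocks_vecMulVec_one_one_sub_one (R : Matrix m n K)
    (hm : (Fintype.card m : K) ≠ 1) :
    (fromBlocks (vecMulVec 1 1 - 1) R Rᵀ 0).det = (-1) ^ Fintype.card m * (1 - Fintype.card m) *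
      (Rᵀ * R - ((Fintype.card m : K) - 1)⁻¹ • vecMulVec (Rᵀ *ᵥ 1) (Rᵀ *ᵥ 1)).det := by
  have hdet := det_vecMulVec_one_one_sub_one (m := m) (K := K)
  have : Invertible (vecMulVec 1 1 - 1 : Matrix m m K) := invertibleOfIsUnitDet _ <| by
    rw [hdet, isUnit_iff_ne_zero]
    exact mul_ne_zero (pow_ne_zero _ (neg_ne_zero.2 one_ne_zero)) (sub_ne_zero.2 hm.symm)
  rw [det_fromBlocks₁₁, hdet, invOf_eq_nonsing_inv, inv_vecMulVec_one_one_sub_one hm,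
    Matrix.mul_sub, Matrix.sub_mul, Matrix.mul_one, Matrix.mul_smul, Matrix.smul_mul,
    mul_vecMulVec, vecMulVec_mul, ← mulVec_transpose, zero_sub, neg_sub]

end AllOnes

section Gram

variable {m n K : Type*} [Fintype m] [Fintype n] [DecidableEq n] [Field K] [LinearOrder K]
  [IsStrictOrderedRing K]

theorem isUnit_det_transpose_mul_self {R : Matrix m n K}
    (hR : Function.Injective R.mulVec) : IsUnit (Rᵀ * R).det := by
  rw [← isUnit_iff_isUnit_det, ← mulVec_injective_iff_isUnit]
  have hker := ker_mulVecLin_transpose_mul_self R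
  rw [LinearMap.ker_eq_bot (f := R.mulVecLin) |>.2 hR] at hker
  exact LinearMap.ker_eq_bot.1 hker

end Gram

end Matrix

theorem stmt_19_general (k s : ℕ) (hk : 2 ≤ k)
    (R : Matrix (Fin k) (Fin s) ℝ)
    (J : Matrix (Fin k) (Fin k) ℝ) (hJ : ∀ i j, J i j = 1)
    (A : Matrix (Fin k ⊕ Fin s) (Fin k ⊕ Fin s) ℝ)
    (hA : A = Matrix.fromBlocks (J - 1) R Rᵀ 0)
    (r : Fin s → ℝ) (hr : r = Matrix.mulVec Rᵀ (fun _ => 1)) :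
    A.det = (-1) ^ (k - 1) * ((k : ℝ) - 1) *
        (Rᵀ * R - ((k : ℝ) - 1)⁻¹ • Matrix.vecMulVec r r).det ∧
    ((∀ z : Fin s → ℝ, R.mulVec z = 0 → z = 0) →
      (Rᵀ * R - ((k : ℝ) - 1)⁻¹ • Matrix.vecMulVec r r).det =
        (1 - ((k : ℝ) - 1)⁻¹ * (r ⬝ᵥ Matrix.mulVec (Rᵀ * R)⁻¹ r)) *
          (Rᵀ * R).det) := by
  have hJ' : J = vecMulVec 1 1 := by
    ext i j
    simp [hJ, vecMulVec_apply]
  have hk1 : (Fintype.card (Fin k) : ℝ) ≠ 1 := by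
    rw [Fintype.card_fin]
    exact_mod_cast (by omega : k ≠ 1)
  change r = Rᵀ *ᵥ 1 at hr
  subst hA hJ' hr
  refine ⟨?_, fun hker => ?_⟩
  · rw [det_fromBlocks_vecMulVec_one_one_sub_one R hk1, Fintype.card_fin]
    obtain ⟨j, rfl⟩ : ∃ j, k = j + 1 := ⟨k - 1, by omega⟩
    push_cast
    ring
  · have hinj : Function.Injective R.mulVec := fun x y h =>
      sub_eq_zero.1 (hker _ (by rw [mulVec_sub, h, sub_self]))
    exact det_sub_smul_vecMulVec_self (isUnit_det_transpose_mul_self hinj) _ _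

/-- For `k ≥ 2`, with `r = Rᵀ 𝟙` the vector of column sums of
`R`, the determinant of the adjacency matrix `A = fromBlocks (J - I) R Rᵀ 0` of
the split graph satisfies
`det A = (-1)^(k-1) (k-1) det(RᵀR - (1/(k-1)) r rᵀ)`; moreover if
`ker R = {0}` then
`det(RᵀR - (1/(k-1)) r rᵀ) = (1 - (1/(k-1)) rᵀ (RᵀR)⁻¹ r) det(RᵀR)`. -/
theorem stmt_19 (k s : ℕ) (hk : 2 ≤ k)
    (R : Matrix (Fin k) (Fin s) ℝ) (hR01 : ∀ i j, R i j = 0 ∨ R i j = 1)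
    (J : Matrix (Fin k) (Fin k) ℝ) (hJ : ∀ i j, J i j = 1)
    (A : Matrix (Fin k ⊕ Fin s) (Fin k ⊕ Fin s) ℝ)
    (hA : A = Matrix.fromBlocks (J - 1) R Rᵀ 0)
    (r : Fin s → ℝ) (hr : r = Matrix.mulVec Rᵀ (fun _ => 1)) :
    A.det = (-1) ^ (k - 1) * ((k : ℝ) - 1) *
        (Rᵀ * R - ((k : ℝ) - 1)⁻¹ • Matrix.vecMulVec r r).det ∧
    ((∀ z : Fin s → ℝ, R.mulVec z = 0 → z = 0) →
      (Rᵀ * R - ((k : ℝ) - 1)⁻¹ • Matrix.vecMulVec r r).det =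
        (1 - ((k : ℝ) - 1)⁻¹ * (r ⬝ᵥ Matrix.mulVec (Rᵀ * R)⁻¹ r)) *
          (Rᵀ * R).det) :=
  stmt_19_general k s hk R J hJ A hA r hr
end
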